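/- Let W1, W2, W3 be three lines in P^3 concurrent through a point w and not coplanar, and let S1, S2, S3 be three lines concurrent through a distinct point s and not coplanar. Then the span of the six Plücker vectors {W1, W2, W3, S1, S2, S3} in R^6 has dimension exactly 5. -/

import Mathlib

/-!
For `w ≠ 0` the map `q ↦ w ∧ q` is linear with kernel `ℝ w`, so the Plücker vectors of three
non-coplanar lines through `w` span its whole 3-dimensional image, and likewise for `s`. The two
images meet exactly in `ℝ (w ∧ s)`: if `w ∧ x = s ∧ y` with `y ∉ span {w, s}`, complete `y, w, s`
to a basis `z, y, w, s`; its determinant is nonzero, but by the Laplace expansion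
`det [a; b; c; d] = ⟪a ∧ b, c ∧ d⟫` it equals `⟪z ∧ w, s ∧ y⟫ = ⟪z ∧ w, w ∧ x⟫ = 0`.
Hence the span has dimension `3 + 3 - 1 = 5`.
-/

def plucker (p q : Fin 4 → ℝ) : Fin 6 → ℝ :=
  ![p 0 * q 1 - p 1 * q 0, p 0 * q 2 - p 2 * q 0, p 0 * q 3 - p 3 * q 0,
    p 1 * q 2 - p 2 * q 1, p 1 * q 3 - p 3 * q 1, p 2 * q 3 - p 3 * q 2]

open Module Submodule

def pluckerPairing (u v : Fin 6 → ℝ) : ℝ :=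
  u 0 * v 5 - u 1 * v 4 + u 2 * v 3 + u 3 * v 2 - u 4 * v 1 + u 5 * v 0

theorem det_eq_pluckerPairing (a b c d : Fin 4 → ℝ) :
    (Matrix.of ![a, b, c, d]).det = pluckerPairing (plucker a b) (plucker c d) := by
  simp [Matrix.det_succ_row_zero, Fin.sum_univ_succ, Fin.succAbove, pluckerPairing, plucker]
  ring

theorem exists_pluckerPairing_ne_zero {a b c : Fin 4 → ℝ}
    (h : LinearIndependent ℝ ![a, b, c]) :
    ∃ d, pluckerPairing (plucker d a) (plucker b c) ≠ 0 := by
  obtain ⟨d, hd⟩ := exists_linearIndependent_cons_of_lt_finrank h (by simp)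
  refine ⟨d, ?_⟩
  rw [← det_eq_pluckerPairing, ← isUnit_iff_ne_zero, ← Matrix.isUnit_iff_isUnit_det,
    ← Matrix.linearIndependent_rows_iff_isUnit]
  exact hd

theorem plucker_ne_zero {a b : Fin 4 → ℝ} (h : LinearIndependent ℝ ![a, b]) :
    plucker a b ≠ 0 := by
  obtain ⟨c, hc⟩ := exists_linearIndependent_cons_of_lt_finrank h (by simp)
  obtain ⟨d, hd⟩ := exists_pluckerPairing_ne_zero hc
  intro h0
  simp [h0, pluckerPairing] at hd

theorem plucker_self (w : Fin 4 → ℝ) : plucker w w = 0 := by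
  ext i; fin_cases i <;> simp [plucker] <;> ring

theorem mem_span_singleton_of_plucker_eq_zero {w q : Fin 4 → ℝ} (hw : w ≠ 0)
    (h : plucker w q = 0) : q ∈ ℝ ∙ w := by
  by_contra hq
  refine plucker_ne_zero ((LinearIndependent.pair_iff' hw).mpr fun a ha => hq ?_) h
  exact mem_span_singleton.mpr ⟨a, ha⟩

theorem plucker_mem_span_of_plucker_eq {w s x y : Fin 4 → ℝ}
    (hws : LinearIndependent ℝ ![w, s]) (h : plucker w x = plucker s y) :
    plucker s y ∈ ℝ ∙ plucker w s := by
  have hy : y ∈ span ℝ {w, s} := by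
    by_contra hy
    have hli : LinearIndependent ℝ ![y, w, s] :=
      linearIndependent_finCons.mpr ⟨hws, by rwa [Matrix.range_cons_cons_empty]⟩
    obtain ⟨z, hz⟩ := exists_pluckerPairing_ne_zero hli
    apply hz
    -- both pairings in the first step expand to `det [z; y; w; s]`
    calc pluckerPairing (plucker z y) (plucker w s)
        = pluckerPairing (plucker z w) (plucker s y) := by simp [pluckerPairing, plucker]; ring
      _ = pluckerPairing (plucker z w) (plucker w x) := by rw [h]
      _ = 0 := by simp [pluckerPairing, plucker]; ring
  obtain ⟨a, b, rfl⟩ := mem_span_pair.mp hy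
  exact mem_span_singleton.mpr ⟨-a, by ext i; fin_cases i <;> simp [plucker] <;> ring⟩

def pluckerLeft (w : Fin 4 → ℝ) : (Fin 4 → ℝ) →ₗ[ℝ] (Fin 6 → ℝ) where
  toFun := plucker w
  map_add' x y := by ext i; fin_cases i <;> simp [plucker] <;> ring
  map_smul' c x := by ext i; fin_cases i <;> simp [plucker] <;> ring

@[simp]
theorem pluckerLeft_apply (w q : Fin 4 → ℝ) : pluckerLeft w q = plucker w q := rfl

theorem ker_pluckerLeft {w : Fin 4 → ℝ} (hw : w ≠ 0) : LinearMap.ker (pluckerLeft w) = ℝ ∙ w :=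
  le_antisymm (fun _ hq => mem_span_singleton_of_plucker_eq_zero hw hq)
    (span_le.mpr (by simp [plucker_self]))

theorem finrank_range_pluckerLeft {w : Fin 4 → ℝ} (hw : w ≠ 0) :
    finrank ℝ (LinearMap.range (pluckerLeft w)) = 3 := by
  have h := (pluckerLeft w).finrank_range_add_finrank_ker
  rw [ker_pluckerLeft hw, finrank_span_singleton hw, finrank_fin_fun] at h
  omega

theorem span_plucker_eq_range_pluckerLeft {w : Fin 4 → ℝ} (q : Fin 3 → Fin 4 → ℝ)
    (hq : span ℝ {w, q 0, q 1, q 2} = ⊤) :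
    span ℝ {plucker w (q 0), plucker w (q 1), plucker w (q 2)} =
      LinearMap.range (pluckerLeft w) := by
  rw [LinearMap.range_eq_map, ← hq, map_span]
  simp [Set.image_insert_eq, plucker_self]

theorem range_pluckerLeft_inf_range_pluckerLeft {w s : Fin 4 → ℝ}
    (hws : LinearIndependent ℝ ![w, s]) :
    LinearMap.range (pluckerLeft w) ⊓ LinearMap.range (pluckerLeft s) = ℝ ∙ plucker w s := by
  refine le_antisymm ?_ (span_le.mpr ?_)
  · rintro _ ⟨⟨x, hx⟩, ⟨y, rfl⟩⟩
    exact plucker_mem_span_of_plucker_eq hws hx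
  · rintro _ rfl
    exact ⟨⟨s, rfl⟩, ⟨-w, by ext i; fin_cases i <;> simp [plucker] <;> ring⟩⟩

theorem two_joints_rank_five_general (w s : Fin 4 → ℝ)
    (qW qS : Fin 3 → (Fin 4 → ℝ))
    (hws : LinearIndependent ℝ ![w, s])
    (hncopW : Submodule.span ℝ {w, qW 0, qW 1, qW 2} = ⊤)
    (hncopS : Submodule.span ℝ {s, qS 0, qS 1, qS 2} = ⊤) :
    Module.finrank ℝ (Submodule.span ℝ
      {plucker w (qW 0), plucker w (qW 1), plucker w (qW 2),
       plucker s (qS 0), plucker s (qS 1), plucker s (qS 2)}) = 5 := by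
  have hw : w ≠ 0 := by simpa using hws.ne_zero 0
  have hs : s ≠ 0 := by simpa using hws.ne_zero 1
  have hsum := finrank_sup_add_finrank_inf_eq (LinearMap.range (pluckerLeft w))
    (LinearMap.range (pluckerLeft s))
  rw [range_pluckerLeft_inf_range_pluckerLeft hws, finrank_span_singleton (plucker_ne_zero hws),
    finrank_range_pluckerLeft hw, finrank_range_pluckerLeft hs,
    ← span_plucker_eq_range_pluckerLeft qW hncopW, ← span_plucker_eq_range_pluckerLeft qS hncopS,
    ← span_union, Set.insert_union, Set.insert_union, Set.singleton_union] at hsum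
  omega

theorem two_joints_rank_five (w s : Fin 4 → ℝ)
    (qW qS : Fin 3 → (Fin 4 → ℝ))
    (hws : LinearIndependent ℝ ![w, s])
    (hliW : ∀ i, LinearIndependent ℝ ![w, qW i])
    (hliS : ∀ i, LinearIndependent ℝ ![s, qS i])
    (hncopW : Submodule.span ℝ {w, qW 0, qW 1, qW 2} = ⊤)
    (hncopS : Submodule.span ℝ {s, qS 0, qS 1, qS 2} = ⊤) :
    Module.finrank ℝ (Submodule.span ℝ
      {plucker w (qW 0), plucker w (qW 1), plucker w (qW 2),
       plucker s (qS 0), plucker s (qS 1), plucker s (qS 2)}) = 5 :=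
  two_joints_rank_five_general w s qW qS hws hncopW hncopS
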